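/- arXiv:2411.15293 — 8 statements merged into one kernel-verified Lean document; each statement's English description precedes it below -/
import Mathlib

section
/- Let b > 0, d > 0, x ∈ [−1,1], y ∈ ℝ, and let L be the real 2×2 matrix L = [[−2(b+d)/(b+2d), −(d(x+1)+b)/(b+d)], [b(d·y − x)/(b+2d) − (b+1), −(b+1)(b+2d)/(b+d)]]. Then trace(L) = (−2(b+d)² − (b+1)(b+2d)²)/((b+d)(b+2d)) < 0 and det(L) = F(x,y,b,d)/((b+d)(b+2d)). Consequently, L has an eigenvalue with nonnegative real part if and only if F(x,y,b,d) ≤ 0. -/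
open Matrix

lemma spec_quad (A : Matrix (Fin 2) (Fin 2) ℂ) (μ : ℂ) :
    μ ∈ spectrum ℂ A ↔ μ^2 - A.trace * μ + A.det = 0 := by
  rw [spectrum.mem_iff, Matrix.isUnit_iff_isUnit_det, isUnit_iff_ne_zero, not_not,
    Matrix.trace_fin_two, Matrix.det_fin_two, Matrix.det_fin_two]
  simp [Matrix.algebraMap_matrix_apply, Matrix.sub_apply]
  constructor <;> intro h <;> linear_combination h

lemma quad (T D : ℝ) (hT : T < 0) :
    (∃ μ : ℂ, μ^2 - (T:ℂ)*μ + (D:ℂ) = 0 ∧ 0 ≤ μ.re) ↔ D ≤ 0 := by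
  constructor
  · rintro ⟨μ, hμ, ha⟩
    rw [Complex.ext_iff] at hμ
    obtain ⟨h1, h2⟩ := hμ
    simp [pow_two, Complex.mul_re, Complex.mul_im] at h1 h2
    have hc : μ.im = 0 := by
      rcases mul_eq_zero.mp (show μ.im * (2*μ.re - T) = 0 by linarith) with h | h
      · exact h
      · nlinarith
    nlinarith [sq_nonneg μ.re]
  · intro hD
    set s := Real.sqrt (T^2 - 4*D) with hs
    have hs2 : s^2 = T^2 - 4*D := Real.sq_sqrt (by nlinarith)
    have hs0 : 0 ≤ s := Real.sqrt_nonneg _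
    refine ⟨(((T + s)/2 : ℝ) : ℂ), ?_, ?_⟩
    · have hre : ((T + s)/2)^2 - T * ((T+s)/2) + D = 0 := by nlinarith
      have := congrArg (fun r : ℝ => (r : ℂ)) hre
      push_cast at this
      push_cast
      linear_combination this
    · simp only [Complex.ofReal_re]
      nlinarith


noncomputable def F (x y b d : ℝ) : ℝ :=
  -b*d*x^2 + (b*d^2*y - b*(b+d) - d*(b+1)*(b+2*d))*x + b*d*(b+d)*y + (b+1)*(b+d)*(b+2*d)

/-- Trace, determinant, and instability criterion for the Jacobian of a Fourier mode of
the linearization about the coexistence equilibrium. -/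
theorem coexistence_equilibrium_stability (b d : ℝ) (hb : 0 < b) (hd : 0 < d)
    (x : ℝ) (hx : x ∈ Set.Icc (-1 : ℝ) 1) (y : ℝ)
    (L : Matrix (Fin 2) (Fin 2) ℝ)
    (hL : L = !![-2*(b+d)/(b+2*d), -(d*(x+1)+b)/(b+d);
                 b*(d*y - x)/(b+2*d) - (b+1), -(b+1)*(b+2*d)/(b+d)]) :
    L.trace = (-2*(b+d)^2 - (b+1)*(b+2*d)^2)/((b+d)*(b+2*d)) ∧
    L.trace < 0 ∧
    L.det = F x y b d / ((b+d)*(b+2*d)) ∧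
    ((∃ μ ∈ spectrum ℂ (L.map (fun t : ℝ => (t : ℂ))), 0 ≤ μ.re) ↔ F x y b d ≤ 0) := by
  have hbd : (0:ℝ) < b + d := by linarith
  have hb2d : (0:ℝ) < b + 2*d := by linarith
  have htr : L.trace = (-2*(b+d)^2 - (b+1)*(b+2*d)^2)/((b+d)*(b+2*d)) := by
    subst hL
    rw [Matrix.trace_fin_two]
    simp only [Matrix.cons_val', Matrix.cons_val_zero, Matrix.cons_val_one, Matrix.head_cons,
      Matrix.empty_val', Matrix.cons_val_fin_one, Matrix.head_fin_const, Matrix.of_apply]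
    field_simp
    ring
  have hdet : L.det = F x y b d / ((b+d)*(b+2*d)) := by
    subst hL
    rw [Matrix.det_fin_two]
    simp only [Matrix.cons_val', Matrix.cons_val_zero, Matrix.cons_val_one, Matrix.head_cons,
      Matrix.empty_val', Matrix.cons_val_fin_one, Matrix.head_fin_const, Matrix.of_apply]
    rw [F]
    field_simp
    ring
  have htrneg : L.trace < 0 := by
    rw [htr]
    apply div_neg_of_neg_of_pos
    · nlinarith
    · positivity
  refine ⟨htr, htrneg, hdet, ?_⟩
  set A := L.map (fun t : ℝ => (t : ℂ)) with hA
  have hAtr : A.trace = (L.trace : ℂ) := by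
    rw [Matrix.trace_fin_two, Matrix.trace_fin_two]
    simp [hA, Matrix.map_apply]
  have hAdet : A.det = (L.det : ℂ) := by
    rw [hA]
    exact (RingHom.map_det Complex.ofRealHom L).symm
  have key : ∀ μ : ℂ, μ ∈ spectrum ℂ A ↔ μ^2 - (L.trace:ℂ)*μ + (L.det:ℂ) = 0 := by
    intro μ
    rw [spec_quad, hAtr, hAdet]
  have : (∃ μ ∈ spectrum ℂ A, 0 ≤ μ.re) ↔ L.det ≤ 0 := by
    rw [← quad L.trace L.det htrneg]
    exact exists_congr fun μ => and_congr_left' (key μ)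
  rw [this, hdet, div_nonpos_iff]
  have h1 : 0 < (b+d)*(b+2*d) := by positivity
  constructor
  · rintro (⟨h2, h3⟩ | ⟨h2, h3⟩) <;> linarith
  · intro h2
    right
    exact ⟨h2, le_of_lt h1⟩
end

section
/- Let b > 0, d > 0, x ∈ [−1,1], y ∈ ℝ, and let L be the real 2×2 matrix L = [[−2(b+d)/(b+2d), −(d(x+1)+b)/(b+d)], [b(d·y − x)/(b+2d) − (b+1), −(b+1)(b+2d)/(b+d)]]. If λ ≥ 0 is a real eigenvalue of L and v ∈ ℝ² is a corresponding eigenvector (v ≠ 0 and L v = λ v), then the two components of v are nonzero and have opposite signs, i.e. v₁ · v₂ < 0. -/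
open Matrix

/-- Any real eigenvector associated to a nonnegative real eigenvalue of the coexistence
Jacobian has components of opposite signs. -/
theorem unstable_eigenvector_opposite_signs (b d : ℝ) (hb : 0 < b) (hd : 0 < d)
    (x : ℝ) (hx : x ∈ Set.Icc (-1 : ℝ) 1) (y : ℝ)
    (L : Matrix (Fin 2) (Fin 2) ℝ)
    (hL : L = !![-2*(b+d)/(b+2*d), -(d*(x+1)+b)/(b+d);
                 b*(d*y - x)/(b+2*d) - (b+1), -(b+1)*(b+2*d)/(b+d)])
    (lam : ℝ) (hlam : 0 ≤ lam)
    (v : Fin 2 → ℝ) (hv : v ≠ 0) (heig : L.mulVec v = lam • v) :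
    v 0 * v 1 < 0 := by
  obtain ⟨hx1, hx2⟩ := hx
  have hbd : (0:ℝ) < b + d := by linarith
  have hb2d : (0:ℝ) < b + 2*d := by linarith
  have h0 : L.mulVec v 0 = lam * v 0 := by rw [heig]; simp
  subst hL
  simp [Matrix.mulVec, dotProduct, Fin.sum_univ_two] at h0
  -- clear denominators
  have hE : (lam * (b + 2*d) + 2*(b+d)) * (b+d) * v 0
      = -((d*(x+1)+b) * (b+2*d)) * v 1 := by
    field_simp at h0
    nlinarith [h0]
  have hA : 0 < lam * (b + 2*d) + 2*(b+d) := by nlinarith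
  have hB : 0 < d*(x+1) + b := by nlinarith
  have hv1 : v 1 ≠ 0 := by
    intro h1
    have h00 : v 0 = 0 := by
      have := hE
      rw [h1] at this
      have hpos : (lam * (b + 2*d) + 2*(b+d)) * (b+d) ≠ 0 := by positivity
      simpa [hpos] using this
    apply hv
    funext i
    fin_cases i <;> simp [h00, h1]
  have hsq : 0 < v 1 * v 1 := mul_self_pos.mpr hv1
  have key : (lam*(b+2*d)+2*(b+d))*(b+d)*(v 0 * v 1)
      = -((d*(x+1)+b)*(b+2*d))*(v 1 * v 1) := by linear_combination hE * v 1
  nlinarith [key, mul_pos (mul_pos hB hb2d) hsq, mul_pos hA hbd]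
end

section
/- Let b ≥ 0 and d ≥ 0 with (b,d) ≠ (0,0), and suppose (b,d) ∉ P, i.e. it is not the case that 0 < b < d. Then F(x,y,b,d) ≥ 0 for all (x,y) ∈ [−1,1] × [−1,1]. -/
/-- Outside the parameter region `P = {0 < b < d}`, `F` is nonnegative on `[-1,1]²`. -/
theorem F_nonneg_outside_P (b d : ℝ) (hb : 0 ≤ b) (hd : 0 ≤ d)
    (hbd : (b, d) ≠ (0, 0)) (hP : ¬ (0 < b ∧ b < d)) :
    ∀ x ∈ Set.Icc (-1 : ℝ) 1, ∀ y ∈ Set.Icc (-1 : ℝ) 1, 0 ≤ F x y b d := by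
  intro x hx y hy
  obtain ⟨hx1, hx2⟩ := hx
  obtain ⟨hy1, hy2⟩ := hy
  unfold F
  rcases le_or_gt b 0 with h | h
  · have hb0 : b = 0 := le_antisymm h hb
    subst hb0
    nlinarith [mul_nonneg hd hd, sq_nonneg d, mul_nonneg (mul_nonneg hd hd) (sub_nonneg.mpr hx2)]
  · have hdb : d ≤ b := by
      by_contra hc
      exact hP ⟨h, not_le.mp hc⟩
    -- F(x,y) = ((1-x)/2)F(-1,-1) + ((1+x)/2)F(1,-1) + bd(1-x²) + (y+1)bd(dx+b+d)
    have h1 : 0 ≤ (1 - x) * (b^2 - b^2*d + (b+1)*(b+2*d)^2) := by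
      apply mul_nonneg (by linarith)
      nlinarith [sq_nonneg (b+2*d), mul_nonneg (mul_nonneg hb hb) (sub_nonneg.mpr hdb), mul_nonneg (mul_nonneg (mul_nonneg hb hd) hd) (le_of_lt h), mul_nonneg (mul_nonneg hb hd) (add_nonneg hb hd), mul_nonneg (mul_nonneg (mul_nonneg hb hb) hd) hb]
    have h2 : 0 ≤ (1 + x) * (b * (b - d) * (b + 2*d)) := by
      apply mul_nonneg (by linarith)
      apply mul_nonneg (mul_nonneg hb (by linarith)) (by linarith)
    have h3 : 0 ≤ b * d * ((1 - x) * (1 + x)) := by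
      apply mul_nonneg (mul_nonneg hb hd)
      apply mul_nonneg <;> linarith
    have h4 : 0 ≤ (y + 1) * (b * d * (d * x + b + d)) := by
      apply mul_nonneg (by linarith)
      apply mul_nonneg (mul_nonneg hb hd)
      nlinarith [mul_nonneg hd (by linarith : (0:ℝ) ≤ x + 1)]
    nlinarith [h1, h2, h3, h4]
end

section
/- Let (b,d) ∈ P, i.e. 0 < b < d. Then F(1,−1,b,d) = b(b+2d)(b−d) < 0, and every point (x,y) ∈ [−1,1] × [−1,1] with F(x,y,b,d) < 0 satisfies x > 1 − b(b+2d)(d−b)/(b²d + 3bd² + b² + 3bd + 2d²) and y < −b/d. In particular the sublevel set {(x,y) ∈ [−1,1]² : F(x,y,b,d) < 0} is a nonempty subset of (0,1] × [−1,0). -/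
/-- For `(b,d) ∈ P`, the sublevel set `{F < 0} ∩ [-1,1]²` is a nonempty subset of the
region `(1 - b(b+2d)(d-b)/(b²d+3bd²+b²+3bd+2d²), 1] × [-1, -b/d) ⊆ (0,1] × [-1,0)`. -/
theorem F_sublevel_set_localization (b d : ℝ) (hb : 0 < b) (hbd : b < d) :
    F 1 (-1) b d = b*(b+2*d)*(b-d) ∧
    F 1 (-1) b d < 0 ∧
    (∀ x ∈ Set.Icc (-1 : ℝ) 1, ∀ y ∈ Set.Icc (-1 : ℝ) 1, F x y b d < 0 →
      1 - b*(b+2*d)*(d-b)/(b^2*d + 3*b*d^2 + b^2 + 3*b*d + 2*d^2) < x ∧ y < -b/d) ∧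
    (∃ x ∈ Set.Icc (-1 : ℝ) 1, ∃ y ∈ Set.Icc (-1 : ℝ) 1, F x y b d < 0) ∧
    (∀ x ∈ Set.Icc (-1 : ℝ) 1, ∀ y ∈ Set.Icc (-1 : ℝ) 1, F x y b d < 0 →
      0 < x ∧ x ≤ 1 ∧ -1 ≤ y ∧ y < 0) := by
  have hd : (0:ℝ) < d := hb.trans hbd
  have hQ : (0:ℝ) < b^2*d + 3*b*d^2 + b^2 + 3*b*d + 2*d^2 := by positivity
  have hN : (0:ℝ) < b*(b+2*d)*(d-b) := by
    have h1 : (0:ℝ) < b+2*d := by linarith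
    have h2 : (0:ℝ) < d-b := by linarith
    positivity
  have hQN : b*(b+2*d)*(d-b) < b^2*d + 3*b*d^2 + b^2 + 3*b*d + 2*d^2 := by nlinarith [pow_pos hb 3, mul_pos (mul_pos hb hb) hd, mul_pos hb (mul_pos hd hd), mul_pos hb hb, mul_pos hb hd, mul_pos hd hd]
  have hval : F 1 (-1) b d = b*(b+2*d)*(b-d) := by unfold F; ring
  have hneg : F 1 (-1) b d < 0 := by
    rw [hval]; nlinarith [hN]
  have hmain : ∀ x ∈ Set.Icc (-1 : ℝ) 1, ∀ y ∈ Set.Icc (-1 : ℝ) 1, F x y b d < 0 →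
      1 - b*(b+2*d)*(d-b)/(b^2*d + 3*b*d^2 + b^2 + 3*b*d + 2*d^2) < x ∧ y < -b/d := by
    rintro x ⟨hx1, hx2⟩ y ⟨hy1, hy2⟩ hF
    constructor
    · -- x part
      have hHx : F x (-1) b d < 0 := by
        have hid : F x y b d - F x (-1) b d = b*d*(d*x+b+d)*(y+1) := by unfold F; ring
        nlinarith [mul_nonneg (mul_nonneg (mul_pos hb hd).le
          (by nlinarith [mul_nonneg hd.le (by linarith : (0:ℝ) ≤ x+1)] : (0:ℝ) ≤ d*x+b+d)) (by linarith : (0:ℝ) ≤ y+1)]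
      have key : (1-x) * (b^2*d + 3*b*d^2 + b^2 + 3*b*d + 2*d^2) < b*(b+2*d)*(d-b) := by
        by_contra hcon
        push_neg at hcon
        set N : ℝ := b*(b+2*d)*(d-b) with hNdef
        set Q : ℝ := b^2*d + 3*b*d^2 + b^2 + 3*b*d + 2*d^2 with hQdef
        have hu : (0:ℝ) ≤ (1-x)*Q - N := by linarith
        have hHm1 : (0:ℝ) < F (-1) (-1) b d := by
          unfold F
          nlinarith [mul_pos hb hd, mul_pos hb (mul_pos hd hd), mul_pos (mul_pos hb hb) hd,
            mul_pos hb hb, mul_pos hd hd]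
        have h2QN : (0:ℝ) < 2*Q - N := by linarith
        have hid2 : F x (-1) b d * ((2*Q - N) * Q) =
            ((1-x)*Q - N) * Q * (F (-1) (-1) b d)
            + (x+1) * (b*d) * N * (Q-N)
            + (b*d) * (x+1) * ((1-x)*Q - N) * (2*Q-N) := by
          rw [hNdef, hQdef]; unfold F; ring
        have t1 : (0:ℝ) ≤ ((1-x)*Q - N) * Q * (F (-1) (-1) b d) :=
          mul_nonneg (mul_nonneg hu hQ.le) hHm1.le
        have t2 : (0:ℝ) ≤ (x+1) * (b*d) * N * (Q-N) := by
          apply mul_nonneg (mul_nonneg (mul_nonneg (by linarith) (mul_pos hb hd).le) hN.le)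
          linarith
        have t3 : (0:ℝ) ≤ (b*d) * (x+1) * ((1-x)*Q - N) * (2*Q-N) :=
          mul_nonneg (mul_nonneg (mul_nonneg (mul_pos hb hd).le (by linarith)) hu) h2QN.le
        have lhsneg : F x (-1) b d * ((2*Q - N) * Q) < 0 :=
          mul_neg_of_neg_of_pos hHx (mul_pos h2QN hQ)
        linarith
      have hdiv : 1 - x < b*(b+2*d)*(d-b) / (b^2*d + 3*b*d^2 + b^2 + 3*b*d + 2*d^2) :=
        (lt_div_iff₀ hQ).mpr key
      linarith
    · -- y part
      by_contra hy
      push_neg at hy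
      have hdyb : (0:ℝ) ≤ d*y + b := by
        have := (div_le_iff₀ hd).mp hy
        nlinarith
      have hid3 : F x y b d = (1-x)*(b*d*x + (b+d)*(2*b*d+b+2*d)) + b*(d*x+b+d)*(d*y+b) := by
        unfold F; ring
      have t1 : (0:ℝ) ≤ (1-x)*(b*d*x + (b+d)*(2*b*d+b+2*d)) := by
        apply mul_nonneg (by linarith)
        nlinarith [mul_nonneg (mul_pos hb hd).le (by linarith : (0:ℝ) ≤ x+1),
          mul_pos hb hd, mul_pos hd hd, mul_pos hb hb]
      have t2 : (0:ℝ) ≤ b*(d*x+b+d)*(d*y+b) :=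
        mul_nonneg (mul_nonneg hb.le (by nlinarith [mul_nonneg hd.le (by linarith : (0:ℝ) ≤ x+1)])) hdyb
      linarith
  refine ⟨hval, hneg, hmain, ⟨1, by norm_num, -1, by norm_num, hneg⟩, ?_⟩
  intro x hx y hy hF
  obtain ⟨h1, h2⟩ := hmain x hx y hy hF
  have hc1 : b*(b+2*d)*(d-b) / (b^2*d + 3*b*d^2 + b^2 + 3*b*d + 2*d^2) < 1 :=
    (div_lt_one hQ).mpr hQN
  have hbd0 : -b/d < 0 := by rw [neg_div]; have : 0 < b/d := div_pos hb hd; linarith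
  exact ⟨by linarith, hx.2, hy.1, by linarith⟩
end

section
/- Let (b,d) ∈ P, i.e. 0 < b < d, and define L(b,d) := (b³ + 2b²d + bd² + b² + 4bd + 2d²)/(b²d + 3bd² + b² + 4bd + 2d²). Then F(x,−1,b,d) < 0 for every x with L(b,d) < x ≤ 1. -/
noncomputable def L (b d : ℝ) : ℝ :=
  (b^3 + 2*b^2*d + b*d^2 + b^2 + 4*b*d + 2*d^2) / (b^2*d + 3*b*d^2 + b^2 + 4*b*d + 2*d^2)

section

variable {b d : ℝ}

lemma L_pos (hb : 0 < b) (hd : 0 < d) : 0 < L b d := by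
  unfold L
  positivity

lemma F_L_eq (hb : 0 < b) (hd : 0 < d) :
    F (L b d) (-1) b d =
      -(b^3 * d * ((d - b) * (2*d + b))^2) / (b^2*d + 3*b*d^2 + b^2 + 4*b*d + 2*d^2)^2 := by
  have hD : 0 < b^2*d + 3*b*d^2 + b^2 + 4*b*d + 2*d^2 := by positivity
  unfold F L
  field_simp
  ring

lemma F_L_neg (hb : 0 < b) (hd : 0 < d) (hbd : b ≠ d) : F (L b d) (-1) b d < 0 := by
  rw [F_L_eq hb hd]
  have : (d - b) * (2*d + b) ≠ 0 := mul_ne_zero (sub_ne_zero.mpr hbd.symm) (by positivity)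
  apply div_neg_of_neg_of_pos _ (by positivity)
  exact neg_neg_of_pos (by positivity)

lemma F_antitoneOn (y : ℝ) (hy : y ≤ 0) (hb : 0 ≤ b) (hd : 0 ≤ d) :
    AntitoneOn (fun x => F x y b d) (Set.Ici 0) := by
  intro x hx x' _ hxx'
  have hc : b*d^2*y - b*(b+d) - d*(b+1)*(b+2*d) ≤ 0 := by
    nlinarith [mul_nonneg (mul_nonneg hb (sq_nonneg d)) (neg_nonneg.mpr hy),
      mul_nonneg hb (add_nonneg hb hd), mul_nonneg (mul_nonneg hd (by linarith : (0:ℝ) ≤ b + 1))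
        (by linarith : (0:ℝ) ≤ b + 2*d)]
  have hsq : x^2 ≤ x'^2 := pow_le_pow_left₀ hx hxx' 2
  simp only [F]
  nlinarith [mul_le_mul_of_nonneg_left hsq (mul_nonneg hb hd),
    mul_le_mul_of_nonpos_left hxx' hc]

end

/-- For `(b,d) ∈ P`, `F(x,-1,b,d) < 0` on the interval `(L(b,d), 1]`. -/
theorem F_neg_on_interval (b d : ℝ) (hb : 0 < b) (hbd : b < d) :
    ∀ x : ℝ,
      (b^3 + 2*b^2*d + b*d^2 + b^2 + 4*b*d + 2*d^2) /
        (b^2*d + 3*b*d^2 + b^2 + 4*b*d + 2*d^2) < x → x ≤ 1 →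
      F x (-1) b d < 0 := by
  intro x hLx _
  have hd : 0 < d := hb.trans hbd
  have hL : 0 < L b d := L_pos hb hd
  calc F x (-1) b d ≤ F (L b d) (-1) b d :=
        F_antitoneOn (-1) (by norm_num) hb.le hd.le hL.le (hL.trans hLx).le hLx.le
    _ < 0 := F_L_neg hb hd hbd.ne
end

section
/- Let (b,d) ∈ P, i.e. 0 < b < d, and let C ≤ 0. Define y_C : [0,1] → ℝ by y_C(x) = (1/(bd)) ( b x + (b+1)(b+2d) − (2(b+1)(b+d)(b+2d) − C)/(d x + b + d) ). Then F(x, y_C(x), b, d) = C for all x ∈ [0,1], and y_C is strictly increasing and strictly concave on [0,1]. In particular, on [0,1] every level set F(x,y,b,d) = C with C ≤ 0 is the graph of a concave, increasing function of x. -/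
noncomputable def yC (b d C x : ℝ) : ℝ :=
  (1/(b*d)) * (b*x + (b+1)*(b+2*d) - (2*(b+1)*(b+d)*(b+2*d) - C)/(d*x + b + d))

lemma inv_convex_aux (u v a c : ℝ) (hu : 0 < u) (hv : 0 < v) (huv : u ≠ v)
    (ha : 0 < a) (hc : 0 < c) (hac : a + c = 1) : 1/(a*u+c*v) < a/u + c/v := by
  obtain rfl : c = 1 - a := by linarith
  have hw : 0 < a*u+(1-a)*v := by positivity
  rw [div_add_div _ _ (ne_of_gt hu) (ne_of_gt hv), div_lt_div_iff₀ hw (by positivity)]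
  nlinarith [mul_pos (mul_pos ha hc) (sq_pos_of_ne_zero (sub_ne_zero.2 huv))]

/-- For `(b,d) ∈ P` and `C ≤ 0`, on `[0,1]` the level set `F = C` is the graph of the
strictly increasing, strictly concave function `yC`. -/
theorem level_sets_concave_increasing (b d : ℝ) (hb : 0 < b) (hbd : b < d)
    (C : ℝ) (hC : C ≤ 0) :
    (∀ x ∈ Set.Icc (0 : ℝ) 1, F x (yC b d C x) b d = C) ∧
    StrictMonoOn (yC b d C) (Set.Icc (0 : ℝ) 1) ∧
    StrictConcaveOn ℝ (Set.Icc (0 : ℝ) 1) (yC b d C) := by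
  have hd : 0 < d := hb.trans hbd
  have hbd0 : (0:ℝ) < b*d := by positivity
  have hK : 0 < 2*(b+1)*(b+d)*(b+2*d) - C := by
    have : (0:ℝ) < 2*(b+1)*(b+d)*(b+2*d) := by positivity
    linarith
  have hden : ∀ x : ℝ, x ∈ Set.Icc (0:ℝ) 1 → 0 < d*x + b + d := by
    intro x hx
    nlinarith [hx.1]
  refine ⟨?_, ?_, ?_⟩
  · intro x hx
    have ht := hden x hx
    unfold F yC
    field_simp
    ring
  · intro x hx y hy hxy
    have hu := hden x hx
    have hv := hden y hy
    unfold yC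
    have h1 : (0:ℝ) < 1/(b*d) := by positivity
    apply mul_lt_mul_of_pos_left _ h1
    have h2 : (2*(b+1)*(b+d)*(b+2*d) - C)/(d*y + b + d)
        < (2*(b+1)*(b+d)*(b+2*d) - C)/(d*x + b + d) := by
      apply div_lt_div_of_pos_left hK hu
      nlinarith
    have h3 : b*x < b*y := by nlinarith
    linarith
  · refine ⟨convex_Icc 0 1, ?_⟩
    intro x hx y hy hxy a c ha hc hac
    obtain rfl : c = 1 - a := by linarith
    have hu := hden x hx
    have hv := hden y hy
    have huv : d*x + b + d ≠ d*y + b + d := by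
      intro h
      apply hxy
      have : d * x = d * y := by linarith
      exact mul_left_cancel₀ (ne_of_gt hd) this
    have key := inv_convex_aux (d*x + b + d) (d*y + b + d) a (1-a) hu hv huv ha hc hac
    simp only [smul_eq_mul]
    have heq : yC b d C (a*x + (1-a)*y) - (a * yC b d C x + (1-a) * yC b d C y)
        = ((2*(b+1)*(b+d)*(b+2*d) - C)/(b*d)) *
          (a/(d*x + b + d) + (1-a)/(d*y + b + d)
            - 1/(a*(d*x + b + d) + (1-a)*(d*y + b + d))) := by
      have hw : 0 < a*(d*x + b + d) + (1-a)*(d*y + b + d) := by positivity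
      have hw2 : d*(a*x + (1-a)*y) + b + d = a*(d*x + b + d) + (1-a)*(d*y + b + d) := by
        ring
      unfold yC
      rw [hw2]
      field_simp
      ring
    have hpos : 0 < ((2*(b+1)*(b+d)*(b+2*d) - C)/(b*d)) *
          (a/(d*x + b + d) + (1-a)/(d*y + b + d)
            - 1/(a*(d*x + b + d) + (1-a)*(d*y + b + d))) := by
      apply mul_pos (by positivity)
      linarith
    linarith [heq, hpos]
end

section
/- For every (b,d) ∈ P, i.e. 0 < b < d, there exists an integer H₁ ≥ 3 (depending only on (b,d)) such that for every integer h ≥ H₁ there exists N₁ ∈ ℕ (depending on (b,d) and h) such that for all integers N ≥ N₁ there exists an integer k with 1 ≤ k ≤ N−1 and F( cos(2πk/N), T_h(cos(2πk/N)), b, d ) < 0. Consequently the coexistence equilibrium of the mean-field survival model is linearly unstable to wave-like perturbations in the k-th discrete Fourier mode. -/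
open Real

noncomputable def cheb (h : ℕ) (x : ℝ) : ℝ := (Polynomial.Chebyshev.T ℝ h).eval x

/-!
At `θ = π / h` the mode function `θ ↦ F (cos θ, T_h (cos θ)) = F (cos θ, cos (h θ))` takes the
value `F (cos (π / h), -1)`, which tends to `F (1, -1) = -b (b + 2d) (d - b) < 0` as `h → ∞`.
So for large `h` it is negative on a neighbourhood of `π / h`, and once `N` is large the grid
`2π k / N` has a point in that neighbourhood.
-/

open Filter Topology Set

lemma F_one_neg_one_neg {b d : ℝ} (hb : 0 < b) (hbd : b < d) : F 1 (-1) b d < 0 := by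
  have key : F 1 (-1) b d = -(b * ((b + 2*d) * (d - b))) := by unfold F; ring
  rw [key, neg_neg_iff_pos]
  exact mul_pos hb (mul_pos (by linarith) (by linarith))

lemma Continuous.F {α : Type*} [TopologicalSpace α] {f g : α → ℝ} (hf : Continuous f)
    (hg : Continuous g) (b d : ℝ) : Continuous fun a => F (f a) (g a) b d := by
  unfold _root_.F
  fun_prop

lemma Filter.Tendsto.F {α : Type*} {l : Filter α} {f g : α → ℝ} {x y : ℝ}
    (hf : Tendsto f l (𝓝 x)) (hg : Tendsto g l (𝓝 y)) (b d : ℝ) :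
    Tendsto (fun a => F (f a) (g a) b d) l (𝓝 (F x y b d)) :=
  -- elaborated without the expected type: unifying against it first makes Lean unfold `F`
  (((continuous_fst.F continuous_snd b d).tendsto (x, y)).comp (hf.prodMk_nhds hg) :)

lemma cheb_cos (h : ℕ) (θ : ℝ) : cheb h (cos θ) = cos (h * θ) := by
  simp [cheb]

lemma eventually_F_cos_pi_div_neg {b d : ℝ} (hF : F 1 (-1) b d < 0) :
    ∀ᶠ h : ℕ in atTop, F (cos (π / h)) (cos (h * (π / h))) b d < 0 := by
  have hcos : Tendsto (fun h : ℕ => cos (π / h)) atTop (𝓝 1) := by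
    simpa [Function.comp_def] using
      (continuous_cos.tendsto 0).comp (tendsto_const_div_atTop_nhds_zero_nat π)
  have hlim : Tendsto (fun h : ℕ => F (cos (π / h)) (-1) b d) atTop (𝓝 (F 1 (-1) b d)) :=
    hcos.F tendsto_const_nhds b d
  filter_upwards [hlim (gt_mem_nhds hF), eventually_ne_atTop 0] with h hneg hh
  rwa [mul_div_cancel₀ _ (Nat.cast_ne_zero.2 hh), cos_pi]

lemma eventually_exists_grid_point_mem {L θ₀ : ℝ} {U : Set ℝ} (hθ₀ : θ₀ ∈ Ioo 0 L)
    (hU : U ∈ 𝓝 θ₀) : ∀ᶠ N : ℕ in atTop, ∃ k : ℕ, 1 ≤ k ∧ k ≤ N - 1 ∧ L * k / N ∈ U := by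
  obtain ⟨hθ₀, hθ₀L⟩ := hθ₀
  have hL : 0 < L := hθ₀.trans hθ₀L
  set c := θ₀ / L
  have hc : 0 < c := div_pos hθ₀ hL
  have hc1 : c < 1 := (div_lt_one hL).2 hθ₀L
  -- the grid point is `k = ⌊c N⌋₊`
  have hlim : Tendsto (fun N : ℕ => L * ((⌊c * N⌋₊ : ℝ) / N)) atTop (𝓝 θ₀) := by
    have := ((tendsto_nat_floor_mul_div_atTop hc.le).comp tendsto_natCast_atTop_atTop).const_mul L
    rwa [mul_div_cancel₀ _ hL.ne'] at this
  filter_upwards [hlim hU, tendsto_nat_floor_mul_atTop c hc (eventually_ge_atTop 1),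
    eventually_gt_atTop 0] with N hNU hk1 hN
  refine ⟨⌊c * N⌋₊, hk1, ?_, by rwa [mul_div_assoc]⟩
  have hkN : (⌊c * N⌋₊ : ℝ) < N :=
    (Nat.floor_le (by positivity)).trans_lt (mul_lt_of_lt_one_left (by positivity) hc1)
  exact Nat.le_sub_one_of_lt (by exact_mod_cast hkN)

/-- Theorem (discrete bifurcation, instability part): for `(b,d) ∈ P`, for all sufficiently
large `h` and then all sufficiently large `N`, some nonzero Fourier mode `k` is linearly
unstable, i.e. `F(cos(2πk/N), T_h(cos(2πk/N)), b, d) < 0`. -/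
theorem discrete_bifurcation_instability (b d : ℝ) (hb : 0 < b) (hbd : b < d) :
    ∃ H₁ : ℕ, 3 ≤ H₁ ∧ ∀ h : ℕ, H₁ ≤ h →
      ∃ N₁ : ℕ, ∀ N : ℕ, N₁ ≤ N →
        ∃ k : ℕ, 1 ≤ k ∧ k ≤ N - 1 ∧
          F (cos (2*π*k/N)) (cheb h (cos (2*π*k/N))) b d < 0 := by
  obtain ⟨H₀, hH₀⟩ := eventually_atTop.1 (eventually_F_cos_pi_div_neg (F_one_neg_one_neg hb hbd))
  refine ⟨max H₀ 3, le_max_right _ _, fun h hh => ?_⟩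
  have hh1 : (1 : ℝ) ≤ h := Nat.one_le_cast.2 (by omega)
  have hθ₀ : π / h ∈ Ioo 0 (2*π) :=
    ⟨by positivity, (div_le_self pi_pos.le hh1).trans_lt (by linarith [pi_pos])⟩
  have hU : {θ | F (cos θ) (cos (h * θ)) b d < 0} ∈ 𝓝 (π / h) :=
    (isOpen_lt (continuous_cos.F (by fun_prop) b d) continuous_const).mem_nhds
      (hH₀ h ((le_max_left _ _).trans hh))
  obtain ⟨N₁, hN₁⟩ := eventually_atTop.1 (eventually_exists_grid_point_mem hθ₀ hU)
  refine ⟨N₁, fun N hN => ?_⟩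
  obtain ⟨k, hk1, hkN, hkU⟩ := hN₁ N hN
  exact ⟨k, hk1, hkN, by rwa [cheb_cos]⟩
end

section
/- For every (b,d) ∈ P, i.e. 0 < b < d, there exists an integer H ≥ 3 such that for every integer h ≥ H there exists a real number φ with 1/(4h) < φ < 1/(2h) and F( cos(2πφ), T_h(cos(2πφ)), b, d ) < 0. -/
/-! Along `x = 1` the function `F` is linear in `y`: `F 1 y b d = b (b + 2d) (d y + b)`, which is
negative as soon as `y < -b/d`. Since `0 < b < d`, we may pick such a `y` in `(-1, 0)`, whose
angle `θ = arccos y` lies in `(π/2, π)`. For `φ = θ / (2πh)` we then have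
`φ ∈ (1/(4h), 1/(2h))` and `T_h (cos 2πφ) = cos θ = y` exactly, while `cos 2πφ = cos (θ/h) → 1`;
continuity of `F` in `x` finishes the argument. -/

open Real

open Filter

theorem cheb_cos_div {n : ℕ} (hn : n ≠ 0) (θ : ℝ) : cheb n (cos (θ / n)) = cos θ := by
  rw [cheb, Polynomial.Chebyshev.T_real_cos]
  congr 1
  push_cast
  field_simp

theorem F_one (y b d : ℝ) : F 1 y b d = b * (b + 2 * d) * (d * y + b) := by
  rw [F]; ring

theorem F_one_neg {y b d : ℝ} (hb : 0 < b) (hd : 0 < d) (hy : y < -b / d) : F 1 y b d < 0 := by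
  have hdy : d * y + b < 0 := by
    rw [lt_div_iff₀ hd] at hy
    linarith
  rw [F_one]
  exact mul_neg_of_pos_of_neg (by positivity) hdy

theorem continuous_F_left (y b d : ℝ) : Continuous fun x => F x y b d := by
  unfold F; fun_prop

theorem eventually_F_cos_div_neg {θ y b d : ℝ} (hF : F 1 y b d < 0) :
    ∀ᶠ n : ℕ in atTop, F (cos (θ / n)) y b d < 0 := by
  have hcos : Tendsto (fun n : ℕ => cos (θ / n)) atTop (nhds 1) :=
    (continuous_cos.tendsto' 0 1 cos_zero).comp (tendsto_const_div_atTop_nhds_zero_nat θ)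
  exact ((continuous_F_left y b d).tendsto 1).comp hcos |>.eventually (eventually_lt_nhds hF)

theorem pi_div_two_lt_arccos {y : ℝ} (hy : y < 0) : π / 2 < arccos y :=
  not_le.1 fun h => (arccos_le_pi_div_two.1 h).not_gt hy

theorem div_two_pi_mul_mem_Ioo {θ h : ℝ} (hθ : θ ∈ Set.Ioo (π / 2) π) (hh : 0 < h) :
    1 / (4 * h) < θ / (2 * π * h) ∧ θ / (2 * π * h) < 1 / (2 * h) := by
  obtain ⟨hθ₁, hθ₂⟩ := hθ
  constructor <;> rw [div_lt_div_iff₀ (by positivity) (by positivity)] <;> nlinarith [pi_pos]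

/-- Large-`N` limit of the discrete instability criterion: for `(b,d) ∈ P` and all
sufficiently large `h`, there is a spatial frequency `φ ∈ (1/(4h), 1/(2h))` with
`F(cos(2πφ), T_h(cos(2πφ)), b, d) < 0`. -/
theorem large_N_instability (b d : ℝ) (hb : 0 < b) (hbd : b < d) :
    ∃ H : ℕ, 3 ≤ H ∧ ∀ h : ℕ, H ≤ h →
      ∃ φ : ℝ, 1/(4*(h : ℝ)) < φ ∧ φ < 1/(2*(h : ℝ)) ∧
        F (cos (2*π*φ)) (cheb h (cos (2*π*φ))) b d < 0 := by
  have hd : 0 < d := hb.trans hbd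
  have hbd₁ : -1 < -b / d := by rw [neg_div, neg_lt_neg_iff]; exact (div_lt_one hd).2 hbd
  obtain ⟨y, hy₁, hy₂⟩ := exists_between hbd₁
  have hy₀ : y < 0 := hy₂.trans (by rw [neg_div]; exact neg_neg_of_pos (div_pos hb hd))
  have hθ : arccos y ∈ Set.Ioo (π / 2) π := ⟨pi_div_two_lt_arccos hy₀, arccos_lt_pi.2 hy₁⟩
  obtain ⟨H, hH⟩ :=
    eventually_atTop.1 (eventually_F_cos_div_neg (θ := arccos y) (F_one_neg hb hd hy₂))
  refine ⟨max H 3, le_max_right _ _, fun h hh => ?_⟩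
  have hh₀ : 0 < h := by omega
  obtain ⟨hφ₁, hφ₂⟩ := div_two_pi_mul_mem_Ioo hθ (by positivity : (0 : ℝ) < h)
  refine ⟨arccos y / (2 * π * h), hφ₁, hφ₂, ?_⟩
  have hφ : 2 * π * (arccos y / (2 * π * h)) = arccos y / h := by field_simp
  rw [hφ, cheb_cos_div hh₀.ne', cos_arccos hy₁.le (by linarith)]
  exact hH h (le_of_max_le_left hh)
end
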